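/- Let λ ∈ a*_{0,C} with real part Re(λ) satisfying ‖Re(λ)‖ < c, and let μ = (w′(λ + ν_{w′}^w))_Q^R be an 'exponent'. If w′ ∈ W^R(R_w;Q)·w (type 1) then ⟨Re(μ), T⟩ ≥ −c‖T‖ for all T ∈ a₀. If w′ ∉ W^R(R_w;Q)·w (type 2) then ⟨Re(μ), T⟩ ≤ (c − c₁ε)‖T‖ for all T ∈ a₀ with d(T) ≥ ε‖T‖, where c₁ > 0 is the constant of the negativity lemma. In particular, if c < c₁ε/2, no exponent can be of both types. -/

import Mathlib

open Finset

abbrev relB (n : ℕ) (β : Fin n → ℕ) (a b : Fin n) : Prop := β a = β b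

abbrev relW (n : ℕ) (rQ rP : Fin n → Fin n → Prop) (w : Equiv.Perm (Fin n)) : Prop :=
  (∀ a b : Fin n, a < b → rP a b → w a < w b) ∧
  (∀ a b : Fin n, a < b → rQ a b → w⁻¹ a < w⁻¹ b)

abbrev inLevi (n : ℕ) (β : Fin n → ℕ) (w : Equiv.Perm (Fin n)) : Prop :=
  ∀ a, β (w a) = β a

abbrev relRw (n : ℕ) (βP βR : Fin n → ℕ) (w : Equiv.Perm (Fin n)) (a b : Fin n) : Prop :=
  βR a = βR b ∧ βP (w⁻¹ a) = βP (w⁻¹ b)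

/-- Successor inside `Fin n` (identity at the last element). -/
def nxt (n : ℕ) (t : Fin n) : Fin n := if h : (t : ℕ) + 1 < n then ⟨(t : ℕ) + 1, h⟩ else t

/-- The Levi relation of `P_w = (M_P ∩ w⁻¹Rw)N_P` for `w ∈ _RW_P`. -/
abbrev rPwRel (n : ℕ) (βP βR : Fin n → ℕ) (w : Equiv.Perm (Fin n)) (a b : Fin n) : Prop :=
  βP a = βP b ∧ βR (w a) = βR (w b)

/-- The Levi relation of `P_{w'} = (M_P ∩ w'⁻¹Qw')N_P` for `w' ∈ _QW_P`. -/
abbrev rPw'Rel (n : ℕ) (βP βQ : Fin n → ℕ) (w' : Equiv.Perm (Fin n)) (a b : Fin n) : Prop :=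
  βP a = βP b ∧ βQ (w' a) = βQ (w' b)

/-- The set of simple-root positions of `Δ_{P_{w'}}^{P_w}` (cuts of `P_{w'}` inside `P_w`),
for `w ∈ _RW_P`, `w₁ ∈ _QW^R_{R_w}` and `w' = w₁w`. -/
def cutSet (n : ℕ) (βP βQ βR : Fin n → ℕ) (w w₁ : Equiv.Perm (Fin n)) : Finset (Fin n) :=
  univ.filter fun t => (t : ℕ) + 1 < n ∧ rPwRel n βP βR w t (nxt n t) ∧
    ¬ rPw'Rel n βP βQ (w₁ * w) t (nxt n t)

/-- `ν = ∑_{α ∈ Δ_{P_{w'}}^{P_w}} c_α α` : a combination of the simple roots at the cuts. -/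
noncomputable def nuC (n : ℕ) (C : Finset (Fin n)) (c : Fin n → ℝ) : Fin n → ℝ :=
  fun a => ∑ t ∈ C, c t * ((if a = t then 1 else 0) - (if a = nxt n t then 1 else 0))

/-- The coweight `ϖ_u^∨ ∈ Δ̂_Q^{R,∨}` attached to a cut `u` of `Q` inside an `R`-block:
value `1 - p/M` on the part of the `R`-block of `u` up to `u`, `-p/M` on the rest of it,
`0` outside, where `M` is the size of the `R`-block and `p` the size of the first part. -/
noncomputable def wtv (n : ℕ) (βR : Fin n → ℕ) (u : Fin n) : Fin n → ℝ := fun b =>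
  if βR b = βR u then
    (if (b : ℕ) ≤ (u : ℕ) then
      1 - ((univ.filter fun x : Fin n => βR x = βR u ∧ (x : ℕ) ≤ (u : ℕ)).card : ℝ) /
        ((univ.filter fun x : Fin n => βR x = βR u).card : ℝ)
    else
      -(((univ.filter fun x : Fin n => βR x = βR u ∧ (x : ℕ) ≤ (u : ℕ)).card : ℝ) /
        ((univ.filter fun x : Fin n => βR x = βR u).card : ℝ)))
  else 0

/-- Mean of `H` over the `β`-block of `a` (the orthogonal projection onto `a_β`). -/
noncomputable def meanB (n : ℕ) (β : Fin n → ℕ) (H : Fin n → ℝ) (a : Fin n) : ℝ :=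
  (∑ b ∈ univ.filter (fun b => β b = β a), H b) /
    ((univ.filter fun b : Fin n => β b = β a).card : ℝ)

/-- Orthogonal projection onto `a_Q^R` (for `Q ⊆ R`): `proj_Q - proj_R`. -/
noncomputable def projQR (n : ℕ) (βQ βR : Fin n → ℕ) (H : Fin n → ℝ) (a : Fin n) : ℝ :=
  meanB n βQ H a - meanB n βR H a

/-- The real part of the exponent `μ = (w'(λ + ν_{w'}^w))_Q^R`. -/
noncomputable def mure (n : ℕ) (βP βQ βR : Fin n → ℕ) (w w₁ : Equiv.Perm (Fin n))
    (c : Fin n → ℝ) (lam : Fin n → ℂ) : Fin n → ℝ :=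
  projQR n βQ βR (fun b => (lam ((w₁ * w)⁻¹ b)).re +
    nuC n (cutSet n βP βQ βR w w₁) c ((w₁ * w)⁻¹ b))

/-- Euclidean norm on `a₀ ≅ ℝ^n`. -/
noncomputable def normE (n : ℕ) (T : Fin n → ℝ) : ℝ := Real.sqrt (∑ a, T a ^ 2)


section Aux

open Finset

variable {n : ℕ}

lemma block_card_pos (β : Fin n → ℕ) (a : Fin n) :
    0 < (univ.filter fun b : Fin n => β b = β a).card :=
  Finset.card_pos.2 ⟨a, by simp⟩

lemma block_filter_congr (β : Fin n → ℕ) {a b : Fin n} (h : β a = β b) :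
    (univ.filter fun x : Fin n => β x = β a) = univ.filter fun x : Fin n => β x = β b := by
  simp only [h]

lemma meanB_congr (β : Fin n → ℕ) (H : Fin n → ℝ) {a b : Fin n} (h : β a = β b) :
    meanB n β H a = meanB n β H b := by
  unfold meanB; rw [block_filter_congr β h]

lemma meanB_of_const (β : Fin n → ℕ) (H : Fin n → ℝ)
    (hH : ∀ a b : Fin n, β a = β b → H a = H b) (a : Fin n) :
    meanB n β H a = H a := by
  unfold meanB
  rw [Finset.sum_congr rfl (fun b hb => hH b a (by simpa using hb)), Finset.sum_const,
    nsmul_eq_mul]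
  exact mul_div_cancel_left₀ _ (Nat.cast_ne_zero.2 (block_card_pos β a).ne')

lemma meanB_idem (β : Fin n → ℕ) (H : Fin n → ℝ) (a : Fin n) :
    meanB n β (meanB n β H) a = meanB n β H a :=
  meanB_of_const β _ (fun _ _ h => meanB_congr β H h) a

lemma meanB_key (β : Fin n → ℕ) (H T : Fin n → ℝ) :
    ∑ a, meanB n β H a * T a =
      ∑ a, ∑ b, (if β a = β b then H b * T a /
        ((univ.filter fun x : Fin n => β x = β a).card : ℝ) else 0) := by
  refine Finset.sum_congr rfl fun a _ => ?_
  rw [meanB, div_mul_eq_mul_div, Finset.sum_mul, Finset.sum_div, ← Finset.sum_filter]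
  exact Finset.sum_congr (by ext x; simp [eq_comm]) fun b _ => rfl

lemma meanB_adj (β : Fin n → ℕ) (H T : Fin n → ℝ) :
    ∑ a, meanB n β H a * T a = ∑ a, H a * meanB n β T a := by
  have hr : ∑ a, H a * meanB n β T a = ∑ a, meanB n β T a * H a := by
    simp [mul_comm]
  rw [meanB_key, hr, meanB_key β T H, Finset.sum_comm]
  refine Finset.sum_congr rfl fun a _ => Finset.sum_congr rfl fun b _ => ?_
  by_cases h : β a = β b
  · rw [if_pos h, if_pos h.symm, block_filter_congr β h.symm]; ring
  · rw [if_neg h, if_neg (fun hh => h hh.symm)]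

lemma meanB_QR {βQ βR : Fin n → ℕ} (hQR : ∀ a b : Fin n, βQ a = βQ b → βR a = βR b)
    (T : Fin n → ℝ) (a : Fin n) :
    meanB n βQ (meanB n βR T) a = meanB n βR T a :=
  meanB_of_const βQ _ (fun x y h => meanB_congr βR T (hQR x y h)) a

lemma projQR_adj (βQ βR : Fin n → ℕ) (H T : Fin n → ℝ) :
    ∑ a, projQR n βQ βR H a * T a = ∑ a, H a * projQR n βQ βR T a := by
  simp only [projQR, sub_mul, mul_sub, Finset.sum_sub_distrib, meanB_adj]

lemma meanB_add (β : Fin n → ℕ) (f g : Fin n → ℝ) (a : Fin n) :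
    meanB n β (fun b => f b + g b) a = meanB n β f a + meanB n β g a := by
  unfold meanB; rw [Finset.sum_add_distrib, add_div]

lemma meanB_sub (β : Fin n → ℕ) (f g : Fin n → ℝ) (a : Fin n) :
    meanB n β (fun b => f b - g b) a = meanB n β f a - meanB n β g a := by
  unfold meanB; rw [Finset.sum_sub_distrib, sub_div]

lemma projQR_add (βQ βR : Fin n → ℕ) (f g : Fin n → ℝ) (a : Fin n) :
    projQR n βQ βR (fun b => f b + g b) a = projQR n βQ βR f a + projQR n βQ βR g a := by
  unfold projQR; rw [meanB_add, meanB_add]; ring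

lemma normE_nonneg (T : Fin n → ℝ) : 0 ≤ normE n T := Real.sqrt_nonneg _

lemma normE_CS (f g : Fin n → ℝ) : ∑ a, f a * g a ≤ normE n f * normE n g := by
  unfold normE; exact Real.sum_mul_le_sqrt_mul_sqrt univ f g

lemma normE_neg (f : Fin n → ℝ) : normE n (fun a => -f a) = normE n f := by
  unfold normE; congr 1; exact Finset.sum_congr rfl fun a _ => by ring

lemma normE_CS_abs (f g : Fin n → ℝ) : |∑ a, f a * g a| ≤ normE n f * normE n g := by
  refine abs_le.2 ⟨?_, normE_CS f g⟩
  have h1 := normE_CS (fun a => -f a) g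
  rw [normE_neg] at h1
  have h2 : ∑ a, -f a * g a = -∑ a, f a * g a := by
    rw [← Finset.sum_neg_distrib]; exact Finset.sum_congr rfl fun a _ => by ring
  linarith [h2 ▸ h1]

lemma projQR_sq {βQ βR : Fin n → ℕ} (hQR : ∀ a b : Fin n, βQ a = βQ b → βR a = βR b)
    (T : Fin n → ℝ) :
    ∑ a, projQR n βQ βR T a ^ 2 = ∑ a, T a * projQR n βQ βR T a := by
  have hAπ : ∀ a, meanB n βQ (projQR n βQ βR T) a = projQR n βQ βR T a := by
    intro a
    unfold projQR
    rw [meanB_sub, meanB_idem, meanB_QR hQR]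
  have hA : ∑ a, meanB n βQ T a * projQR n βQ βR T a = ∑ a, T a * projQR n βQ βR T a := by
    rw [meanB_adj]
    exact Finset.sum_congr rfl fun a _ => by rw [hAπ]
  have hBA : ∑ a, meanB n βQ T a * meanB n βR T a = ∑ a, T a * meanB n βR T a := by
    rw [meanB_adj]
    exact Finset.sum_congr rfl fun a _ => by rw [meanB_QR hQR]
  have hBB : ∑ a, meanB n βR T a * meanB n βR T a = ∑ a, T a * meanB n βR T a := by
    rw [meanB_adj]
    exact Finset.sum_congr rfl fun a _ => by rw [meanB_idem]
  have hB : ∑ a, meanB n βR T a * projQR n βQ βR T a = 0 := by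
    have e : ∀ a, meanB n βR T a * projQR n βQ βR T a =
        meanB n βQ T a * meanB n βR T a - meanB n βR T a * meanB n βR T a := by
      intro a; unfold projQR; ring
    rw [Finset.sum_congr rfl fun a _ => e a, Finset.sum_sub_distrib, hBA, hBB, sub_self]
  have expand : ∑ a, projQR n βQ βR T a ^ 2 =
      ∑ a, meanB n βQ T a * projQR n βQ βR T a -
        ∑ a, meanB n βR T a * projQR n βQ βR T a := by
    rw [← Finset.sum_sub_distrib]
    refine Finset.sum_congr rfl fun a _ => ?_
    have : projQR n βQ βR T a = meanB n βQ T a - meanB n βR T a := rfl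
    rw [this]; ring
  rw [expand, hA, hB, sub_zero]

lemma projQR_norm_le {βQ βR : Fin n → ℕ} (hQR : ∀ a b : Fin n, βQ a = βQ b → βR a = βR b)
    (T : Fin n → ℝ) :
    normE n (projQR n βQ βR T) ≤ normE n T := by
  have hs : normE n (projQR n βQ βR T) ^ 2 = ∑ a, projQR n βQ βR T a ^ 2 := by
    unfold normE
    exact Real.sq_sqrt (Finset.sum_nonneg fun a _ => sq_nonneg _)
  have h2 : ∑ a, T a * projQR n βQ βR T a ≤ normE n T * normE n (projQR n βQ βR T) :=
    normE_CS T _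
  have h3 := projQR_sq hQR T
  nlinarith [normE_nonneg T, normE_nonneg (projQR n βQ βR T), hs, h2, h3]

lemma projQR_pair_bound {βQ βR : Fin n → ℕ} (hQR : ∀ a b : Fin n, βQ a = βQ b → βR a = βR b)
    (v T : Fin n → ℝ) :
    |∑ a, projQR n βQ βR v a * T a| ≤ normE n v * normE n T := by
  rw [projQR_adj]
  refine (normE_CS_abs v _).trans ?_
  exact mul_le_mul_of_nonneg_left (projQR_norm_le hQR T) (normE_nonneg v)

end Aux

/-- Type 1 / type 2 dichotomy of exponents (lemma `lem:types` and remark `rq:types`):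
with `‖Re λ‖ < c` and `μ = (w'(λ+ν_{w'}^w))_Q^R`:
(1) if `w' ∈ W^R(R_w;Q)·w` (type 1) then `⟨Re μ, T⟩ ≥ -c‖T‖` for all `T`;
(2) if `w' ∉ W^R(R_w;Q)·w` (type 2), given the negativity constant `c₁ > 0`, then
`⟨Re μ, T⟩ ≤ (c - c₁ε)‖T‖` for all `T` with `d(T) ≥ ε‖T‖`;
(3) if `c < c₁ε/2`, no vector can satisfy both inequality regimes (provided some `T ≠ 0`
with `d(T) ≥ ε‖T‖` exists). -/
theorem stmt_12 (n : ℕ) (βP βQ βR : Fin n → ℕ)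
    (hmP : Monotone βP) (hmQ : Monotone βQ) (hmR : Monotone βR)
    (hQR : ∀ a b : Fin n, βQ a = βQ b → βR a = βR b)
    (w w₁ : Equiv.Perm (Fin n))
    (hw : relW n (relB n βR) (relB n βP) w)
    (hw₁L : inLevi n βR w₁)
    (hw₁ : relW n (relB n βQ) (relRw n βP βR w) w₁)
    (c : Fin n → ℝ) (hcneg : ∀ t ∈ cutSet n βP βQ βR w w₁, c t < 0)
    (lam : Fin n → ℂ) (cb : ℝ) (hlam : Real.sqrt (∑ a, ((lam a).re) ^ 2) < cb)
    (ε c₁ : ℝ) (hε : 0 < ε) (hε1 : ε < 1) (hc₁ : 0 < c₁) :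
    ((∀ a b : Fin n, relRw n βP βR w a b → βQ (w₁ a) = βQ (w₁ b)) →
      ∀ T : Fin n → ℝ,
        -(cb * normE n T) ≤ ∑ a, mure n βP βQ βR w w₁ c lam a * T a) ∧
    ((¬ ∀ a b : Fin n, relRw n βP βR w a b → βQ (w₁ a) = βQ (w₁ b)) →
      (∀ (T : Fin n → ℝ) (δ : ℝ), 0 ≤ δ →
        (∀ t : Fin n, (t : ℕ) + 1 < n → δ ≤ T t - T (nxt n t)) →
        ∑ a, projQR n βQ βR
            (fun b => nuC n (cutSet n βP βQ βR w w₁) c ((w₁ * w)⁻¹ b)) a * T a ≤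
          -c₁ * δ) →
      ∀ T : Fin n → ℝ,
        (∀ t : Fin n, (t : ℕ) + 1 < n → ε * normE n T ≤ T t - T (nxt n t)) →
        ∑ a, mure n βP βQ βR w w₁ c lam a * T a ≤ (cb - c₁ * ε) * normE n T) ∧
    (∀ x : Fin n → ℝ,
      (∀ T : Fin n → ℝ, -(cb * normE n T) ≤ ∑ a, x a * T a) →
      (∀ T : Fin n → ℝ,
        (∀ t : Fin n, (t : ℕ) + 1 < n → ε * normE n T ≤ T t - T (nxt n t)) →
        ∑ a, x a * T a ≤ (cb - c₁ * ε) * normE n T) →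
      (∃ T : Fin n → ℝ, normE n T ≠ 0 ∧
        ∀ t : Fin n, (t : ℕ) + 1 < n → ε * normE n T ≤ T t - T (nxt n t)) →
      cb < c₁ * ε / 2 → False) := by
  constructor
  · -- type 1
    intro h1 T
    have hcut : cutSet n βP βQ βR w w₁ = ∅ := by
      ext t
      simp only [cutSet, Finset.mem_filter, Finset.mem_univ, true_and,
        Finset.notMem_empty, iff_false]
      rintro ⟨ht, hPw, hneg⟩
      refine hneg ⟨hPw.1, ?_⟩
      have := h1 (w t) (w (nxt n t)) ⟨hPw.2, by
        simp only [Equiv.Perm.inv_def, Equiv.symm_apply_apply]; exact hPw.1⟩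
      simpa [Equiv.Perm.mul_apply] using this
    have hmure : mure n βP βQ βR w w₁ c lam =
        projQR n βQ βR (fun b => (lam ((w₁ * w)⁻¹ b)).re) := by
      unfold mure
      rw [hcut]
      simp [nuC]
    have hnv : normE n (fun b => (lam ((w₁ * w)⁻¹ b)).re) ≤ cb := by
      unfold normE
      have : ∑ b, (lam ((w₁ * w)⁻¹ b)).re ^ 2 = ∑ a, (lam a).re ^ 2 :=
        Equiv.sum_comp ((w₁ * w)⁻¹ : Equiv.Perm (Fin n)) (fun a => (lam a).re ^ 2)
      rw [show (fun b => (lam ((w₁ * w)⁻¹ b)).re ^ 2) = fun b => ((lam ((w₁ * w)⁻¹ b)).re) ^ 2 from rfl] at *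
      calc Real.sqrt (∑ b, (lam ((w₁ * w)⁻¹ b)).re ^ 2)
          = Real.sqrt (∑ a, (lam a).re ^ 2) := by rw [this]
        _ ≤ cb := le_of_lt hlam
    have habs := projQR_pair_bound hQR (fun b => (lam ((w₁ * w)⁻¹ b)).re) T
    have hle : normE n (fun b => (lam ((w₁ * w)⁻¹ b)).re) * normE n T ≤ cb * normE n T :=
      mul_le_mul_of_nonneg_right hnv (normE_nonneg T)
    rw [hmure]
    have := (abs_le.mp habs).1
    linarith
  refine ⟨?_, ?_⟩
  · -- type 2
    intro _ hneg T hT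
    have hsplit : ∀ a, mure n βP βQ βR w w₁ c lam a =
        projQR n βQ βR (fun b => (lam ((w₁ * w)⁻¹ b)).re) a +
        projQR n βQ βR (fun b => nuC n (cutSet n βP βQ βR w w₁) c ((w₁ * w)⁻¹ b)) a := by
      intro a
      unfold mure
      exact projQR_add βQ βR _ _ a
    have hδ : (0:ℝ) ≤ ε * normE n T := mul_nonneg hε.le (normE_nonneg T)
    have h2 := hneg T (ε * normE n T) hδ hT
    have hnv : normE n (fun b => (lam ((w₁ * w)⁻¹ b)).re) ≤ cb := by
      unfold normE
      have heq : ∑ b, (lam ((w₁ * w)⁻¹ b)).re ^ 2 = ∑ a, (lam a).re ^ 2 :=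
        Equiv.sum_comp ((w₁ * w)⁻¹ : Equiv.Perm (Fin n)) (fun a => (lam a).re ^ 2)
      calc Real.sqrt (∑ b, (lam ((w₁ * w)⁻¹ b)).re ^ 2)
          = Real.sqrt (∑ a, (lam a).re ^ 2) := by rw [heq]
        _ ≤ cb := le_of_lt hlam
    have habs := projQR_pair_bound hQR (fun b => (lam ((w₁ * w)⁻¹ b)).re) T
    have h1 : ∑ a, projQR n βQ βR (fun b => (lam ((w₁ * w)⁻¹ b)).re) a * T a ≤
        cb * normE n T := by
      have := (abs_le.mp habs).2
      have hle : normE n (fun b => (lam ((w₁ * w)⁻¹ b)).re) * normE n T ≤ cb * normE n T :=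
        mul_le_mul_of_nonneg_right hnv (normE_nonneg T)
      linarith
    have hsum : ∑ a, mure n βP βQ βR w w₁ c lam a * T a =
        (∑ a, projQR n βQ βR (fun b => (lam ((w₁ * w)⁻¹ b)).re) a * T a) +
        ∑ a, projQR n βQ βR
          (fun b => nuC n (cutSet n βP βQ βR w w₁) c ((w₁ * w)⁻¹ b)) a * T a := by
      rw [← Finset.sum_add_distrib]
      refine Finset.sum_congr rfl fun a _ => ?_
      rw [hsplit a]; ring
    rw [hsum]
    have : -c₁ * (ε * normE n T) = -(c₁ * ε * normE n T) := by ring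
    rw [this] at h2
    have hgoal : (cb - c₁ * ε) * normE n T = cb * normE n T - c₁ * ε * normE n T := by ring
    linarith [h1, h2, hgoal.ge]
  · -- no overlap
    rintro x hlo hhi ⟨T, hT0, hTd⟩ hcb
    have hTpos : 0 < normE n T := lt_of_le_of_ne (normE_nonneg T) (Ne.symm hT0)
    have h1 := hlo T
    have h2 := hhi T hTd
    nlinarith [h1.trans h2, hTpos, hcb]
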